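/- Let L : R^p → R be convex and differentiable, R a norm with dual norm R*, and δ* ∈ R^p with R(δ*) ≤ l. Let δ̂ be a minimizer of L over the constraint set {δ : R(δ) ≤ l}, and suppose L satisfies the restricted strong convexity condition L(δ* + Δ) − L(δ*) − ⟨∇L(δ*), Δ⟩ ≥ κ‖Δ‖² − τ for all Δ with R(Δ) ≤ 2l. Then Δ̂ = δ̂ − δ* satisfies κ‖Δ̂‖² ≤ 2 R*(∇L(δ*)) l + τ. -/

import Mathlib

/-!
Since `L δ̂ ≤ L δ*`, the restricted strong convexity inequality at `Δ̂ = δ̂ - δ*` (admissible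
because `R Δ̂ ≤ R δ̂ + R δ* ≤ 2l`) leaves `κ‖Δ̂‖² ≤ τ - ⟪∇L(δ*), Δ̂⟫`, and the Hölder-type
inequality `⟪u, v⟫ ≤ R u · R* v` bounds the last term by `2l · R*(∇L(δ*))`. That inequality needs
the supremum defining `R*` to be finite: in finite dimension `R` is continuous (it is convex),
so it is bounded below by a positive constant on the compact Euclidean unit sphere.
-/

open scoped RealInnerProductSpace

namespace Seminorm

variable {E : Type*} [NormedAddCommGroup E] [NormedSpace ℝ E] [FiniteDimensional ℝ E]

theorem continuous_of_finiteDimensional (p : Seminorm ℝ E) : Continuous p :=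
  p.convexOn.locallyLipschitz.continuous

theorem exists_pos_mul_norm_le (p : Seminorm ℝ E) (hp : ∀ x, p x = 0 → x = 0) :
    ∃ c > 0, ∀ x, c * ‖x‖ ≤ p x := by
  have hpos : ∀ x ∈ Metric.sphere (0 : E) 1, 0 < p x := fun x hx =>
    (apply_nonneg p x).lt_of_ne' fun h => by simp [hp x h] at hx
  obtain ⟨c, hc, hcp⟩ := (isCompact_sphere (0 : E) 1).exists_forall_le'
    p.continuous_of_finiteDimensional.continuousOn hpos
  refine ⟨c, hc, fun x => ?_⟩
  rcases eq_or_ne x 0 with rfl | hx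
  · simp
  have hx' : 0 < ‖x‖ := norm_pos_iff.mpr hx
  have hunit : ‖x‖⁻¹ • x ∈ Metric.sphere (0 : E) 1 := by simp [norm_smul, hx'.ne']
  have hcx := hcp _ hunit
  rwa [map_smul_eq_mul, Real.norm_eq_abs, abs_inv, abs_norm, le_inv_mul_iff₀ hx', mul_comm]
    at hcx

end Seminorm

section DualNorm

variable {E : Type*} [NormedAddCommGroup E] [InnerProductSpace ℝ E]

noncomputable def dualNorm (R : E → ℝ) (v : E) : ℝ :=
  sSup {y | ∃ u, R u ≤ 1 ∧ y = ⟪u, v⟫}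

variable [FiniteDimensional ℝ E] (p : Seminorm ℝ E)

theorem bddAbove_inner_of_le_one (hp : ∀ x, p x = 0 → x = 0) (v : E) :
    BddAbove {y | ∃ u, p u ≤ 1 ∧ y = ⟪u, v⟫} := by
  obtain ⟨c, hc, hcp⟩ := p.exists_pos_mul_norm_le hp
  refine ⟨c⁻¹ * ‖v‖, ?_⟩
  rintro _ ⟨u, hu, rfl⟩
  have hu' : ‖u‖ ≤ c⁻¹ := by
    rw [← mul_one c⁻¹, le_inv_mul_iff₀ hc]
    exact (hcp u).trans hu
  exact (real_inner_le_norm u v).trans (mul_le_mul_of_nonneg_right hu' (norm_nonneg v))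

theorem dualNorm_nonneg (hp : ∀ x, p x = 0 → x = 0) (v : E) : 0 ≤ dualNorm p v :=
  le_csSup (bddAbove_inner_of_le_one p hp v) ⟨0, by simp, by simp⟩

theorem inner_le_mul_dualNorm (hp : ∀ x, p x = 0 → x = 0) (u v : E) :
    ⟪u, v⟫ ≤ p u * dualNorm p v := by
  rcases eq_or_ne u 0 with rfl | hu
  · simp
  have hpu : 0 < p u := (apply_nonneg p u).lt_of_ne' fun h => hu (hp u h)
  have hmem : ⟪(p u)⁻¹ • u, v⟫ ∈ {y | ∃ u, p u ≤ 1 ∧ y = ⟪u, v⟫} :=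
    ⟨_, by rw [map_smul_eq_mul, Real.norm_eq_abs, abs_inv, abs_of_pos hpu,
      inv_mul_cancel₀ hpu.ne'], rfl⟩
  have hle := le_csSup (bddAbove_inner_of_le_one p hp v) hmem
  rwa [real_inner_smul_left, inv_mul_le_iff₀ hpu] at hle

end DualNorm

theorem stmt7_general {p : ℕ}
    (L : EuclideanSpace ℝ (Fin p) → ℝ)
    (R Rstar : EuclideanSpace ℝ (Fin p) → ℝ)
    (hR_add : ∀ x y, R (x + y) ≤ R x + R y)
    (hR_smul : ∀ (c : ℝ) (x : EuclideanSpace ℝ (Fin p)), R (c • x) = |c| * R x)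
    (hR_def : ∀ x, R x = 0 → x = 0)
    (hRstar : ∀ v, Rstar v = sSup {y | ∃ u, R u ≤ 1 ∧ y = ⟪u, v⟫})
    (δs : EuclideanSpace ℝ (Fin p)) (l : ℝ) (hδs : R δs ≤ l)
    (κ τ : ℝ)
    (hRSC : ∀ Δ : EuclideanSpace ℝ (Fin p), R Δ ≤ 2 * l →
      κ * ‖Δ‖ ^ 2 - τ ≤ L (δs + Δ) - L δs - ⟪gradient L δs, Δ⟫)
    (δhat : EuclideanSpace ℝ (Fin p))
    (hfeas : R δhat ≤ l)
    (hmin : ∀ δ, R δ ≤ l → L δhat ≤ L δ) :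
    κ * ‖δhat - δs‖ ^ 2 ≤ 2 * Rstar (gradient L δs) * l + τ := by
  obtain ⟨N, rfl⟩ : ∃ N : Seminorm ℝ (EuclideanSpace ℝ (Fin p)), ⇑N = R :=
    ⟨Seminorm.of R hR_add (hR_smul ·), rfl⟩
  obtain rfl : Rstar = dualNorm N := funext hRstar
  set g := gradient L δs
  set Δ := δhat - δs
  have hΔ : N Δ ≤ 2 * l := by linarith [map_sub_le_add N δhat δs]
  have hdual : -⟪g, Δ⟫ ≤ 2 * l * dualNorm N g := calc
    -⟪g, Δ⟫ = ⟪-Δ, g⟫ := by rw [inner_neg_left, real_inner_comm]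
    _ ≤ N (-Δ) * dualNorm N g := inner_le_mul_dualNorm N hR_def _ _
    _ ≤ 2 * l * dualNorm N g :=
      mul_le_mul_of_nonneg_right (by rwa [map_neg_eq_map]) (dualNorm_nonneg N hR_def g)
  have hrsc := hRSC Δ hΔ
  rw [add_sub_cancel] at hrsc
  linarith [hmin δs hδs]

/-- Constrained fine-tuning error bound under restricted strong convexity. -/
theorem stmt7 {p : ℕ}
    (L : EuclideanSpace ℝ (Fin p) → ℝ)
    (hL_convex : ConvexOn ℝ Set.univ L)
    (hL_diff : Differentiable ℝ L)
    (R Rstar : EuclideanSpace ℝ (Fin p) → ℝ)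
    (hR_nonneg : ∀ x, 0 ≤ R x)
    (hR_add : ∀ x y, R (x + y) ≤ R x + R y)
    (hR_smul : ∀ (c : ℝ) (x : EuclideanSpace ℝ (Fin p)), R (c • x) = |c| * R x)
    (hR_def : ∀ x, R x = 0 → x = 0)
    (hRstar : ∀ v, Rstar v = sSup {y | ∃ u, R u ≤ 1 ∧ y = ⟪u, v⟫})
    (δs : EuclideanSpace ℝ (Fin p)) (l : ℝ) (hδs : R δs ≤ l)
    (κ τ : ℝ) (hκ : 0 < κ) (hτ : 0 ≤ τ)
    (hRSC : ∀ Δ : EuclideanSpace ℝ (Fin p), R Δ ≤ 2 * l →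
      κ * ‖Δ‖ ^ 2 - τ ≤ L (δs + Δ) - L δs - ⟪gradient L δs, Δ⟫)
    (δhat : EuclideanSpace ℝ (Fin p))
    (hfeas : R δhat ≤ l)
    (hmin : ∀ δ, R δ ≤ l → L δhat ≤ L δ) :
    κ * ‖δhat - δs‖ ^ 2 ≤ 2 * Rstar (gradient L δs) * l + τ :=
  stmt7_general L R Rstar hR_add hR_smul hR_def hRstar δs l hδs κ τ hRSC δhat hfeas hmin
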